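/- Let n ≥ 2, let U ⊆ ℝ^n be open, and let V, μ^1,…,μ^n be smooth functions on U satisfying both equations (EQ1) and (EQ2) for all i, j ∈ {1,…,n}. Then the product (∂_2 μ^1)·(∂_1 V) vanishes at every point of U. -/

import Mathlib

open scoped BigOperators

section Defs

variable {ι : Type*} [Fintype ι] [DecidableEq ι]

/-- Partial derivative of a scalar function in the `i`-th coordinate direction. -/
noncomputable def pd (i : ι) (f : (ι → ℝ) → ℝ) (u : ι → ℝ) : ℝ :=
  fderiv ℝ f u (Pi.single i 1)

end Defs

/-- Single-block structure constants `c^i_{jk} = δ^i_{j+k−1}` (0-based: `1` iff `j+k = i`). -/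
noncomputable def sbc {n : ℕ} (i j k : Fin n) : ℝ :=
  if (j : ℕ) + (k : ℕ) = (i : ℕ) then 1 else 0

/-- Components of the unit: `e^i = δ^i_1` (0-based: `1` iff `i = 0`). -/
noncomputable def sbe {n : ℕ} (i : Fin n) : ℝ :=
  if (i : ℕ) = 0 then 1 else 0

/-- Left-hand side of equation (EQ1) of the single-block generalised Gibbons–Tsarev system:
`μ^t(c^s_{ti} ∂_s∂_j V − c^s_{tj} ∂_s∂_i V) − (c^m_{js} ∂_i μ^s − c^m_{is} ∂_j μ^s) ∂_m V`. -/
noncomputable def GT1 {n : ℕ} (μ : (Fin n → ℝ) → (Fin n → ℝ)) (V : (Fin n → ℝ) → ℝ)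
    (i j : Fin n) (u : Fin n → ℝ) : ℝ :=
  (∑ t, ∑ s, μ u t * (sbc s t i * pd s (fun v => pd j V v) u
                      - sbc s t j * pd s (fun v => pd i V v) u))
  - (∑ m', ∑ s, (sbc m' j s * pd i (fun v => μ v s) u
                 - sbc m' i s * pd j (fun v => μ v s) u) * pd m' V u)

/-- Left-hand side of equation (EQ2) of the single-block generalised Gibbons–Tsarev system:
`μ^h(c^i_{hk} ∂_j μ^k + c^i_{jk} ∂_h μ^k − c^k_{jh} ∂_k μ^i) − μ^h c^i_{js} c^s_{hk} ∂_1 μ^k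
 + e^i ∂_j V − δ^i_j ∂_1 V`. -/
noncomputable def GT2 {n : ℕ} (μ : (Fin n → ℝ) → (Fin n → ℝ)) (V : (Fin n → ℝ) → ℝ)
    (i j : Fin n) (u : Fin n → ℝ) : ℝ :=
  (∑ h, ∑ k, μ u h * (sbc i h k * pd j (fun v => μ v k) u
                      + sbc i j k * pd h (fun v => μ v k) u
                      - sbc k j h * pd k (fun v => μ v i) u))
  - (∑ h, ∑ s, ∑ k, ∑ t, μ u h * sbc i j s * sbc s h k * sbe t * pd t (fun v => μ v k) u)
  + sbe i * pd j V u
  - (if i = j then 1 else 0) * (∑ t, sbe t * pd t V u)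

lemma sum_pin {n : ℕ} (a : ℕ) (f : Fin n → ℝ) :
    (∑ i : Fin n, if (i : ℕ) = a then f i else 0) = if h : a < n then f ⟨a, h⟩ else 0 := by
  split_ifs with h
  · rw [Finset.sum_eq_single (⟨a, h⟩ : Fin n)]
    · simp
    · intro i _ hne
      exact if_neg fun hv => hne (Fin.ext hv)
    · intro habs; exact absurd (Finset.mem_univ _) habs
  · refine Finset.sum_eq_zero fun i _ => if_neg fun hv => h ?_
    have := i.isLt; omega

lemma key2 {n : ℕ} (μ : (Fin n → ℝ) → (Fin n → ℝ)) (V : (Fin n → ℝ) → ℝ)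
    (u : Fin n → ℝ) (j : Fin n) (hj : 1 ≤ (j : ℕ)) :
    (∑ i : Fin n, if (i : ℕ) + (j : ℕ) < n then GT2 μ V i (i + j) u else 0) = pd j V u := by
  classical
  set D : Fin n → Fin n → ℝ := fun a b => pd a (fun v => μ v b) u with hDdef
  set D' : ℕ → Fin n → ℝ := fun a b => if h : a < n then D ⟨a, h⟩ b else 0 with hD'def
  have hvadd : ∀ i : Fin n, (i : ℕ) + (j : ℕ) < n → ((i + j : Fin n) : ℕ) = (i : ℕ) + (j : ℕ) := by
    intro i h; rw [Fin.val_add, Nat.mod_eq_of_lt h]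
  -- Step 1 : value of each GT2 term
  have step1 : ∀ i : Fin n, (i : ℕ) + (j : ℕ) < n →
      GT2 μ V i (i + j) u =
        (∑ h, ∑ k, μ u h * (sbc i h k * D (i + j) k))
        - (∑ h, ∑ k, μ u h * (sbc k (i + j) h * D k i))
        + (if (i : ℕ) = 0 then pd j V u else 0) := by
    intro i hχ
    have hv := hvadd i hχ
    have hmid : ∀ k : Fin n, sbc i (i + j) k = 0 := by
      intro k; simp only [sbc, hv]; rw [if_neg]; omega
    have hne : i ≠ i + j := by
      intro h; have := congrArg Fin.val h; rw [hv] at this; omega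
    have hquad : (∑ h, ∑ s, ∑ k, ∑ t,
        μ u h * sbc i (i + j) s * sbc s h k * sbe t * pd t (fun v => μ v k) u) = 0 := by
      refine Finset.sum_eq_zero fun h _ => Finset.sum_eq_zero fun s _ => ?_
      simp [hmid s]
    have hsbe : sbe i * pd (i + j) V u = (if (i : ℕ) = 0 then pd j V u else 0) := by
      by_cases h0 : (i : ℕ) = 0
      · have hij : i + j = j := by
          apply Fin.ext; rw [hv, h0, Nat.zero_add]
        rw [sbe, if_pos h0, hij, if_pos h0, one_mul]
      · rw [sbe, if_neg h0, if_neg h0, zero_mul]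
    have hsplit : (∑ h, ∑ k, μ u h * (sbc i h k * pd (i + j) (fun v => μ v k) u
                      + sbc i (i + j) k * pd h (fun v => μ v k) u
                      - sbc k (i + j) h * pd k (fun v => μ v i) u))
        = (∑ h, ∑ k, μ u h * (sbc i h k * D (i + j) k))
          - (∑ h, ∑ k, μ u h * (sbc k (i + j) h * D k i)) := by
      rw [← Finset.sum_sub_distrib]
      refine Finset.sum_congr rfl fun h _ => ?_
      rw [← Finset.sum_sub_distrib]
      refine Finset.sum_congr rfl fun k _ => ?_
      rw [hmid k]
      show μ u h * (sbc i h k * D (i + j) k + 0 * D h k - sbc k (i + j) h * D k i) = _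
      ring
    rw [GT2, hquad, hsbe, if_neg hne, hsplit]
    ring
  have claim1 : ∀ h k i : Fin n,
      (if (i : ℕ) + (j : ℕ) < n then μ u h * (sbc i h k * D (i + j) k) else 0)
        = if (i : ℕ) = (h : ℕ) + (k : ℕ)
            then μ u h * D' ((h : ℕ) + (k : ℕ) + (j : ℕ)) k else 0 := by
    intro h k i
    by_cases h1 : (h : ℕ) + (k : ℕ) = (i : ℕ)
    · rw [if_pos h1.symm]
      by_cases h2 : (i : ℕ) + (j : ℕ) < n
      · rw [if_pos h2]
        have hs : sbc i h k = 1 := by rw [sbc, if_pos h1]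
        have hlt : (h : ℕ) + (k : ℕ) + (j : ℕ) < n := by omega
        have hDeq : D (i + j) k = D' ((h : ℕ) + (k : ℕ) + (j : ℕ)) k := by
          show D (i + j) k = if hh : (h : ℕ) + (k : ℕ) + (j : ℕ) < n then D ⟨_, hh⟩ k else 0
          rw [dif_pos hlt]
          congr 1
          exact Fin.ext (by simp only [Fin.val_mk]; rw [hvadd i h2]; omega)
        rw [hs, one_mul, hDeq]
      · rw [if_neg h2]
        have : D' ((h : ℕ) + (k : ℕ) + (j : ℕ)) k = 0 := by
          show (if hh : (h : ℕ) + (k : ℕ) + (j : ℕ) < n then D ⟨_, hh⟩ k else 0) = 0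
          rw [dif_neg (by omega)]
        rw [this, mul_zero]
    · have hs : sbc i h k = 0 := by rw [sbc, if_neg h1]
      have hne : ¬ ((i : ℕ) = (h : ℕ) + (k : ℕ)) := fun hv => h1 hv.symm
      rw [hs, if_neg hne]
      split <;> simp
  have claim2 : ∀ i h k : Fin n,
      (if (i : ℕ) + (j : ℕ) < n then μ u h * (sbc k (i + j) h * D k i) else 0)
        = if (k : ℕ) = (i : ℕ) + (h : ℕ) + (j : ℕ) then μ u h * D k i else 0 := by
    intro i h k
    by_cases hc : (k : ℕ) = (i : ℕ) + (h : ℕ) + (j : ℕ)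
    · have h2 : (i : ℕ) + (j : ℕ) < n := by have := k.isLt; omega
      rw [if_pos h2, if_pos hc]
      have hs : sbc k (i + j) h = 1 := by
        rw [sbc, if_pos (show ((i + j : Fin n) : ℕ) + (h : ℕ) = (k : ℕ) by
          rw [hvadd i h2]; omega)]
      rw [hs, one_mul]
    · rw [if_neg hc]
      by_cases h2 : (i : ℕ) + (j : ℕ) < n
      · rw [if_pos h2]
        have hs : sbc k (i + j) h = 0 := by
          rw [sbc, if_neg (show ¬(((i + j : Fin n) : ℕ) + (h : ℕ) = (k : ℕ)) by
            rw [hvadd i h2]; omega)]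
        rw [hs, zero_mul, mul_zero]
      · rw [if_neg h2]
  -- assemble
  have hsum : (∑ i : Fin n, if (i : ℕ) + (j : ℕ) < n then GT2 μ V i (i + j) u else 0)
      = (∑ i : Fin n, if (i : ℕ) + (j : ℕ) < n
            then (∑ h, ∑ k, μ u h * (sbc i h k * D (i + j) k)) else 0)
        - (∑ i : Fin n, if (i : ℕ) + (j : ℕ) < n
            then (∑ h, ∑ k, μ u h * (sbc k (i + j) h * D k i)) else 0)
        + (∑ i : Fin n, if (i : ℕ) = 0 then pd j V u else 0) := by
    rw [← Finset.sum_sub_distrib, ← Finset.sum_add_distrib]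
    refine Finset.sum_congr rfl fun i _ => ?_
    by_cases hχ : (i : ℕ) + (j : ℕ) < n
    · rw [if_pos hχ, if_pos hχ, if_pos hχ, step1 i hχ]
    · rw [if_neg hχ, if_neg hχ, if_neg hχ]
      have h0 : ¬ ((i : ℕ) = 0) := by have := j.isLt; omega
      rw [if_neg h0]; ring
  rw [hsum]
  have hS3 : (∑ i : Fin n, if (i : ℕ) = 0 then pd j V u else 0) = pd j V u := by
    rw [sum_pin 0 (fun _ => pd j V u), dif_pos (by have := j.isLt; omega)]
  have hS1 : (∑ i : Fin n, if (i : ℕ) + (j : ℕ) < n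
          then (∑ h, ∑ k, μ u h * (sbc i h k * D (i + j) k)) else 0)
      = ∑ h : Fin n, ∑ k : Fin n, μ u h * D' ((h : ℕ) + (k : ℕ) + (j : ℕ)) k := by
    have e1 : ∀ i : Fin n, (if (i : ℕ) + (j : ℕ) < n
          then (∑ h, ∑ k, μ u h * (sbc i h k * D (i + j) k)) else 0)
        = ∑ h : Fin n, ∑ k : Fin n,
            (if (i : ℕ) + (j : ℕ) < n then μ u h * (sbc i h k * D (i + j) k) else 0) := by
      intro i; split
      · rfl
      · simp
    rw [Finset.sum_congr rfl fun i _ => e1 i, Finset.sum_comm]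
    refine Finset.sum_congr rfl fun h _ => ?_
    rw [Finset.sum_comm]
    refine Finset.sum_congr rfl fun k _ => ?_
    rw [Finset.sum_congr rfl fun i _ => claim1 h k i, sum_pin]
    by_cases hlt : (h : ℕ) + (k : ℕ) < n
    · rw [dif_pos hlt]
    · rw [dif_neg hlt]
      have : D' ((h : ℕ) + (k : ℕ) + (j : ℕ)) k = 0 := by
        show (if hh : (h : ℕ) + (k : ℕ) + (j : ℕ) < n then D ⟨_, hh⟩ k else 0) = 0
        rw [dif_neg (by omega)]
      rw [this, mul_zero]
  have hS2 : (∑ i : Fin n, if (i : ℕ) + (j : ℕ) < n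
          then (∑ h, ∑ k, μ u h * (sbc k (i + j) h * D k i)) else 0)
      = ∑ h : Fin n, ∑ k : Fin n, μ u h * D' ((h : ℕ) + (k : ℕ) + (j : ℕ)) k := by
    have e2 : ∀ i : Fin n, (if (i : ℕ) + (j : ℕ) < n
          then (∑ h, ∑ k, μ u h * (sbc k (i + j) h * D k i)) else 0)
        = ∑ h : Fin n, ∑ k : Fin n,
            (if (i : ℕ) + (j : ℕ) < n then μ u h * (sbc k (i + j) h * D k i) else 0) := by
      intro i; split
      · rfl
      · simp
    rw [Finset.sum_congr rfl fun i _ => e2 i]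
    have step : ∀ i h : Fin n,
        (∑ k : Fin n, (if (i : ℕ) + (j : ℕ) < n then μ u h * (sbc k (i + j) h * D k i) else 0))
          = μ u h * D' ((i : ℕ) + (h : ℕ) + (j : ℕ)) i := by
      intro i h
      rw [Finset.sum_congr rfl fun k _ => claim2 i h k, sum_pin]
      show _ = μ u h * (if hh : (i : ℕ) + (h : ℕ) + (j : ℕ) < n then D ⟨_, hh⟩ i else 0)
      split
      · rfl
      · rw [mul_zero]
    rw [Finset.sum_congr rfl fun i _ => Finset.sum_congr rfl fun h _ => step i h]
    rw [Finset.sum_comm]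
    refine Finset.sum_congr rfl fun h _ => Finset.sum_congr rfl fun i _ => ?_
    rw [Nat.add_comm (i : ℕ) (h : ℕ)]
  rw [hS1, hS2, hS3]
  ring

/-- a solution of (EQ1) and (EQ2) of the single-block generalised
Gibbons–Tsarev system satisfies `(∂_2 μ^1)·(∂_1 V) = 0` on `U`. -/
theorem stmt10 (n : ℕ) (hn : 2 ≤ n) (U : Set (Fin n → ℝ)) (hU : IsOpen U)
    (V : (Fin n → ℝ) → ℝ) (μ : (Fin n → ℝ) → (Fin n → ℝ))
    (hV : ContDiffOn ℝ (⊤ : ℕ∞) V U) (hμ : ContDiffOn ℝ (⊤ : ℕ∞) μ U)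
    (hEQ1 : ∀ i j : Fin n, ∀ u ∈ U, GT1 μ V i j u = 0)
    (hEQ2 : ∀ i j : Fin n, ∀ u ∈ U, GT2 μ V i j u = 0) :
    ∀ u ∈ U,
      pd (⟨1, by omega⟩ : Fin n) (fun v => μ v ⟨0, by omega⟩) u
        * pd (⟨0, by omega⟩ : Fin n) V u = 0 := by
  intro u hu
  have h0n : 0 < n := by omega
  have zeroV : ∀ j : Fin n, 1 ≤ (j : ℕ) → ∀ v ∈ U, pd j V v = 0 := by
    intro j hj v hv
    rw [← key2 μ V v j hj]
    refine Finset.sum_eq_zero fun i _ => ?_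
    split
    · exact hEQ2 i (i + j) v hv
    · rfl
  have hzero : ∀ g : (Fin n → ℝ) → ℝ, (∀ v ∈ U, g v = 0) → ∀ s : Fin n, pd s g u = 0 := by
    intro g hg s
    have hev : g =ᶠ[nhds u] fun _ => (0 : ℝ) :=
      Filter.eventuallyEq_of_mem (hU.mem_nhds hu) hg
    rw [pd, hev.fderiv_eq]
    simp
  have hVat : ContDiffAt ℝ 2 V u := (hV.contDiffAt (hU.mem_nhds hu)).of_le (WithTop.coe_le_coe.mpr le_top)
  have hdiff : DifferentiableAt ℝ (fderiv ℝ V) u :=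
    (hVat.fderiv_right (m := 1) (by norm_num)).differentiableAt (by norm_num)
  have hsecond : ∀ a b : Fin n, pd a (fun v => pd b V v) u
      = fderiv ℝ (fderiv ℝ V) u (Pi.single a 1) (Pi.single b 1) := by
    intro a b
    show fderiv ℝ (fun v => fderiv ℝ V v (Pi.single b 1)) u (Pi.single a 1) = _
    rw [fderiv_clm_apply hdiff (differentiableAt_const _)]
    simp
  have hsymmV := hVat.isSymmSndFDerivAt (by simp)
  set i0 : Fin n := ⟨0, by omega⟩ with hi0
  set i1 : Fin n := ⟨1, by omega⟩ with hi1
  show pd i1 (fun v => μ v i0) u * pd i0 V u = 0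
  have hv1 : (i1 : ℕ) = 1 := rfl
  have hv0 : (i0 : ℕ) = 0 := rfl
  have hmix : ∀ s : Fin n, 1 ≤ (s : ℕ) → pd s (fun v => pd i0 V v) u = 0 := by
    intro s hs
    rw [hsecond s i0, hsymmV.eq, ← hsecond i0 s]
    exact hzero (fun v => pd s V v) (zeroV s hs) i0
  have hA : (∑ t, ∑ s, μ u t * (sbc s t i0 * pd s (fun v => pd i1 V v) u
            - sbc s t i1 * pd s (fun v => pd i0 V v) u)) = 0 := by
    refine Finset.sum_eq_zero fun t _ => Finset.sum_eq_zero fun s _ => ?_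
    have h1 : pd s (fun v => pd i1 V v) u = 0 :=
      hzero _ (zeroV i1 (by rw [hv1])) s
    by_cases hc : (t : ℕ) + (i1 : ℕ) = (s : ℕ)
    · have h2 : pd s (fun v => pd i0 V v) u = 0 := hmix s (by omega)
      rw [h1, h2]; ring
    · have h2 : sbc s t i1 = 0 := by rw [sbc, if_neg hc]
      rw [h1, h2]; ring
  have hB : (∑ m', ∑ s, (sbc m' i1 s * pd i0 (fun v => μ v s) u
             - sbc m' i0 s * pd i1 (fun v => μ v s) u) * pd m' V u)
      = -(pd i1 (fun v => μ v i0) u * pd i0 V u) := by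
    rw [Finset.sum_eq_single i0]
    · rw [Finset.sum_eq_single i0]
      · have e1 : sbc i0 i1 i0 = 0 := by rw [sbc, if_neg (by omega)]
        have e2 : sbc i0 i0 i0 = 1 := by rw [sbc, if_pos (by omega)]
        rw [e1, e2]; ring
      · intro s _ hs
        have hsv : ¬ ((s : ℕ) = 0) := fun hv => hs (Fin.ext hv)
        have e1 : sbc i0 i1 s = 0 := by rw [sbc, if_neg (by omega)]
        have e2 : sbc i0 i0 s = 0 := by rw [sbc, if_neg (by omega)]
        rw [e1, e2]; ring
      · intro habs; exact absurd (Finset.mem_univ _) habs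
    · intro m' _ hm
      have hmv : 1 ≤ (m' : ℕ) := by
        have : ¬ ((m' : ℕ) = 0) := fun hv => hm (Fin.ext hv)
        omega
      simp [zeroV m' hmv u hu]
    · intro habs; exact absurd (Finset.mem_univ _) habs
  have h1 := hEQ1 i0 i1 u hu
  rw [GT1, hA, hB] at h1
  linarith
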